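/- Let Q_N ∈ ℝ^{n₁×n₁} be a nonzero symmetric positive semidefinite matrix, let δ_pN = ‖Q_N‖_∞, and define R_pN = δ_pN I_{n₁} − off(Q_N). Then R_pN is symmetric positive definite, and every eigenvalue λ of R_pN satisfies min{ (Q_N)_{jj} : (Q_N)_{jj} > 0 } ≤ λ < 2 δ_pN. (Here a nonzero positive semidefinite matrix necessarily has a strictly positive diagonal entry, and if a diagonal entry of Q_N is zero then its entire row and column are zero.) -/

import Mathlib

/-!
Each row of a positive semidefinite `Q` either vanishes (its diagonal entry is zero) or has
diagonal entry at least `m₀`, so its off-diagonal absolute row sum is at most `δ - m₀`.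
Hence every Gershgorin disc of `R = δ • 1 - off Q`, all centred at `δ`, lies in
`[m₀, 2δ - m₀]`. Since `R` is symmetric and all its eigenvalues are `≥ m₀ > 0`, it is positive
definite.
-/

open Matrix

/-- off(B): same off-diagonal entries as B, zero diagonal. -/
def offDiag {ι : Type*} [DecidableEq ι] (B : Matrix ι ι ℝ) : Matrix ι ι ℝ :=
  B - Matrix.diagonal (fun i => B i i)

/-- Infinity (maximum absolute row sum) norm of a matrix. -/
noncomputable def infNorm {m n : ℕ} (B : Matrix (Fin m) (Fin n) ℝ) : ℝ :=
  ⨆ i, ∑ j, |B i j|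

open Metric
open scoped ComplexOrder

namespace Matrix

variable {ι : Type*} [DecidableEq ι]

theorem smul_one_sub_offDiag_apply_self (c : ℝ) (B : Matrix ι ι ℝ) (i : ι) :
    (c • 1 - offDiag B) i i = c := by
  simp [offDiag]

theorem smul_one_sub_offDiag_apply_of_ne (c : ℝ) (B : Matrix ι ι ℝ) {i j : ι} (h : i ≠ j) :
    (c • 1 - offDiag B) i j = -B i j := by
  simp [offDiag, h]

theorem isHermitian_smul_one_sub_offDiag (c : ℝ) {B : Matrix ι ι ℝ} (hB : B.IsHermitian) :
    (c • 1 - offDiag B).IsHermitian :=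
  (isHermitian_one.smul (IsSelfAdjoint.all c)).sub (hB.sub (isHermitian_diagonal _))

theorem sum_norm_smul_one_sub_offDiag_erase [Fintype ι] (c : ℝ) (B : Matrix ι ι ℝ) (i : ι) :
    ∑ j ∈ Finset.univ.erase i, ‖(c • 1 - offDiag B) i j‖ = ∑ j ∈ Finset.univ.erase i, |B i j| :=
  Finset.sum_congr rfl fun j hj => by
    rw [smul_one_sub_offDiag_apply_of_ne c B (Finset.ne_of_mem_erase hj).symm, norm_neg,
      Real.norm_eq_abs]

variable [Fintype ι]

theorem PosSemidef.apply_eq_zero_of_diag_eq_zero {𝕜 : Type*} [RCLike 𝕜] {A : Matrix ι ι 𝕜}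
    (hA : A.PosSemidef) {i : ι} (hi : A i i = 0) (j : ι) : A j i = 0 := by
  have h := (hA.dotProduct_mulVec_zero_iff (Pi.single i 1)).mp (by simpa using hi)
  simpa [mulVec, dotProduct, Pi.single_apply] using congrFun h j

theorem IsHermitian.posDef_of_forall_eigenvalue_pos {𝕜 : Type*} [RCLike 𝕜] {A : Matrix ι ι 𝕜}
    (hA : A.IsHermitian) (h : ∀ (μ : ℝ) (x : ι → 𝕜), x ≠ 0 → A *ᵥ x = μ • x → 0 < μ) :
    A.PosDef :=
  hA.posDef_iff_eigenvalues_pos.mpr fun i =>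
    h _ _ (by simpa using hA.eigenvectorBasis.orthonormal.ne_zero i)
      (hA.mulVec_eigenvectorBasis i)

theorem eigenvalue_mem_closedBall_of_diag_eq {K : Type*} [NormedField K] {A : Matrix ι ι K}
    {d : K} {r : ℝ} (hdiag : ∀ i, A i i = d) (hrow : ∀ i, ∑ j ∈ Finset.univ.erase i, ‖A i j‖ ≤ r)
    {μ : K} {x : ι → K} (hx : x ≠ 0) (hAx : A *ᵥ x = μ • x) : μ ∈ closedBall d r := by
  have hμ : Module.End.HasEigenvalue (toLin' A) μ :=
    Module.End.hasEigenvalue_of_hasEigenvector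
      ⟨by simpa [Module.End.mem_eigenspace_iff] using hAx, hx⟩
  obtain ⟨k, hk⟩ := eigenvalue_mem_ball hμ
  exact closedBall_subset_closedBall (hrow k) (hdiag k ▸ hk)

end Matrix

theorem sum_abs_le_infNorm {m n : ℕ} (B : Matrix (Fin m) (Fin n) ℝ) (i : Fin m) :
    ∑ j, |B i j| ≤ infNorm B :=
  le_ciSup (f := fun i => ∑ j, |B i j|) (Set.finite_range _).bddAbove i

theorem abs_apply_le_infNorm {m n : ℕ} (B : Matrix (Fin m) (Fin n) ℝ) (i : Fin m) (j : Fin n) :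
    |B i j| ≤ infNorm B :=
  (Finset.single_le_sum (fun k _ => abs_nonneg (B i k)) (Finset.mem_univ j)).trans
    (sum_abs_le_infNorm B i)

theorem sum_abs_offDiag_row_le_infNorm_sub {n : ℕ} {Q : Matrix (Fin n) (Fin n) ℝ}
    (hQ : Q.PosSemidef) {m₀ : ℝ} (hm₀ : IsLeast {v : ℝ | 0 < v ∧ ∃ j, Q j j = v} m₀) (i : Fin n) :
    ∑ j ∈ Finset.univ.erase i, |Q i j| ≤ infNorm Q - m₀ := by
  obtain ⟨⟨-, j₀, rfl⟩, hleast⟩ := hm₀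
  rw [Finset.sum_erase_eq_sub (Finset.mem_univ i), abs_of_nonneg hQ.diag_nonneg]
  rcases hQ.diag_nonneg.eq_or_lt with hzero | hpos
  · have hrow : ∀ j, Q i j = 0 := fun j => by
      rw [← hQ.1.apply, hQ.apply_eq_zero_of_diag_eq_zero hzero.symm, star_zero]
    simpa [hrow] using (le_abs_self _).trans (abs_apply_le_infNorm Q j₀ j₀)
  · linarith [sum_abs_le_infNorm Q i, hleast ⟨hpos, i, rfl⟩]

theorem stmt_7 {n₁ : ℕ} (QN : Matrix (Fin n₁) (Fin n₁) ℝ)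
    (hQN : QN.PosSemidef)
    (δpN : ℝ) (hδpN : δpN = infNorm QN)
    (RpN : Matrix (Fin n₁) (Fin n₁) ℝ)
    (hRpN : RpN = δpN • (1 : Matrix (Fin n₁) (Fin n₁) ℝ) - offDiag QN)
    (m₀ : ℝ) (hm₀ : IsLeast {v : ℝ | 0 < v ∧ ∃ j, QN j j = v} m₀) :
    RpN.PosDef ∧
    ∀ lam : ℝ, ∀ x : Fin n₁ → ℝ, x ≠ 0 → RpN.mulVec x = lam • x →
      m₀ ≤ lam ∧ lam < 2 * δpN := by
  have hrow := sum_abs_offDiag_row_le_infNorm_sub hQN hm₀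
  subst hRpN hδpN
  have heig : ∀ (lam : ℝ) x, x ≠ 0 → (infNorm QN • 1 - offDiag QN) *ᵥ x = lam • x →
      m₀ ≤ lam ∧ lam ≤ 2 * infNorm QN - m₀ := by
    intro lam x hx hRx
    have hball := eigenvalue_mem_closedBall_of_diag_eq (smul_one_sub_offDiag_apply_self _ QN)
      (fun i => (sum_norm_smul_one_sub_offDiag_erase _ QN i).trans_le (hrow i)) hx hRx
    rw [mem_closedBall, Real.dist_eq, abs_le] at hball
    constructor <;> linarith
  refine ⟨(isHermitian_smul_one_sub_offDiag _ hQN.1).posDef_of_forall_eigenvalue_pos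
    fun lam x hx hRx => hm₀.1.1.trans_le (heig lam x hx hRx).1, fun lam x hx hRx => ?_⟩
  obtain ⟨hlow, hhigh⟩ := heig lam x hx hRx
  exact ⟨hlow, by linarith [hm₀.1.1]⟩
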